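/- arXiv:2203.05298 — 2 statements merged into one kernel-verified Lean document; each statement's English description precedes it below -/
import Mathlib

section
/- If a signed digraph G has an initial cycle, then no Boolean network on G is synchronizing. -/
/-- A signed digraph on vertex set `V`, given by its positive and negative arc relations. -/
structure SignedDigraph (V : Type*) where
  pos : V → V → Prop
  neg : V → V → Prop

/-- The last vertex of a walk starting at `u` with the given steps. -/
def walkEnd {V : Type*} (u : V) (steps : List (V × Bool)) : V :=
  (steps.map Prod.fst).getLastD u

/-- The sign of a walk (`true` = positive): positive iff the number of
negative (`false`) arcs is even. -/
def walkSign {V : Type*} (steps : List (V × Bool)) : Bool :=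
  steps.foldl (fun acc step => acc == step.2) true

namespace SignedDigraph

variable {V : Type*}

/-- Arc of the underlying digraph. -/
def Arc (G : SignedDigraph V) (j i : V) : Prop := G.pos j i ∨ G.neg j i

/-- `G.IsWalk u steps`: `steps` is a list of (next vertex, sign of arc) pairs
describing a walk in `G` starting at `u`. -/
def IsWalk (G : SignedDigraph V) : V → List (V × Bool) → Prop
  | _, [] => True
  | u, step :: rest =>
      (if step.2 then G.pos u step.1 else G.neg u step.1) ∧ G.IsWalk step.1 rest

/-- A (simple) path from `u`: a walk with pairwise distinct vertices. -/
def IsPath (G : SignedDigraph V) (u : V) (steps : List (V × Bool)) : Prop :=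
  G.IsWalk u steps ∧ (u :: steps.map Prod.fst).Nodup

/-- A (simple) path from `u` to `v`. -/
def IsPathFrom (G : SignedDigraph V) (u : V) (steps : List (V × Bool)) (v : V) : Prop :=
  G.IsPath u steps ∧ walkEnd u steps = v

/-- A cycle through `u`: a nonempty closed walk from `u` back to `u` with no repeated
vertex except the endpoint. -/
def IsCycle (G : SignedDigraph V) (u : V) (steps : List (V × Bool)) : Prop :=
  steps ≠ [] ∧ G.IsWalk u steps ∧ walkEnd u steps = u ∧
    (u :: (steps.map Prod.fst).dropLast).Nodup

/-- `G` has no positive cycle. -/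
def NoPositiveCycle (G : SignedDigraph V) : Prop :=
  ∀ u steps, G.IsCycle u steps → walkSign steps = false

/-- `G` has no negative cycle. -/
def NoNegativeCycle (G : SignedDigraph V) : Prop :=
  ∀ u steps, G.IsCycle u steps → walkSign steps = true

/-- Reachability in the underlying digraph. -/
def Reach (G : SignedDigraph V) (u v : V) : Prop :=
  ∃ steps, G.IsWalk u steps ∧ walkEnd u steps = v

/-- The underlying digraph of `G` is strongly connected. -/
def StronglyConnected (G : SignedDigraph V) : Prop := ∀ u v, G.Reach u v

/-- `u` and `v` lie in the same strong component. -/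
def SameComp (G : SignedDigraph V) (u v : V) : Prop := G.Reach u v ∧ G.Reach v u

/-- The strong component of `u`. -/
def comp (G : SignedDigraph V) (u : V) : Set V := {v | G.SameComp u v}

/-- The in-degree of `i`: the number of arcs (with their signs) entering `i`. -/
noncomputable def inDegree (G : SignedDigraph V) (i : V) : ℕ :=
  {j | G.pos j i}.ncard + {j | G.neg j i}.ncard

/-- A source: a vertex with no in-coming arc. -/
def IsSource (G : SignedDigraph V) (i : V) : Prop := ∀ j, ¬ G.Arc j i

/-- `G` has no sources. -/
def NoSource (G : SignedDigraph V) : Prop := ∀ i, ¬ G.IsSource i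

/-- The subgraph induced on a set `S` of vertices. -/
def induce (G : SignedDigraph V) (S : Set V) : SignedDigraph V where
  pos j i := j ∈ S ∧ i ∈ S ∧ G.pos j i
  neg j i := j ∈ S ∧ i ∈ S ∧ G.neg j i

/-- The underlying digraph of `G` restricted to `S` is a cycle: `S` is nonempty,
every vertex of `S` has exactly one in-coming arc inside `S`, and `S` is strongly
connected inside `S`. -/
def IsCycleGraphOn (G : SignedDigraph V) (S : Set V) : Prop :=
  S.Nonempty ∧ (∀ i ∈ S, (G.induce S).inDegree i = 1) ∧
    ∀ u ∈ S, ∀ v ∈ S, (G.induce S).Reach u v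

/-- The underlying digraph of `G` is a cycle. -/
def IsCycleGraph (G : SignedDigraph V) : Prop := G.IsCycleGraphOn Set.univ

/-- `S` is an initial strong component of `G`. -/
def IsInitialComponent (G : SignedDigraph V) (S : Set V) : Prop :=
  (∃ u, S = G.comp u) ∧ ∀ j i, i ∈ S → G.Arc j i → j ∈ S

/-- `G` has an initial cycle: an initial strong component whose underlying digraph
is a cycle. -/
def HasInitialCycle (G : SignedDigraph V) : Prop :=
  ∃ S : Set V, G.IsInitialComponent S ∧ G.IsCycleGraphOn S

/-- A forward path: a nonempty path whose last arc joins two distinct strong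
components. -/
def IsForwardPath (G : SignedDigraph V) (u : V) (steps : List (V × Bool)) (v : V) : Prop :=
  G.IsPathFrom u steps v ∧ steps ≠ [] ∧ ¬ G.SameComp (walkEnd u steps.dropLast) v

/-- `G` is `i`-homogenous: every strong component contains a vertex `j` such that
all forward paths from `j` to `i` have the same sign. -/
def IsHomogenousAt (G : SignedDigraph V) (i : V) : Prop :=
  ∀ u : V, ∃ j, G.SameComp u j ∧
    ∀ steps₁ steps₂, G.IsForwardPath j steps₁ i → G.IsForwardPath j steps₂ i →
      walkSign steps₁ = walkSign steps₂

/-- `G` is homogenous. -/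
def IsHomogenous (G : SignedDigraph V) : Prop := ∀ i, G.IsHomogenousAt i

/-- `G` is simple: no pair of parallel arcs of opposite signs. -/
def IsSimple (G : SignedDigraph V) : Prop := ∀ j i, ¬ (G.pos j i ∧ G.neg j i)

end SignedDigraph

section BooleanNetwork

variable {V : Type*} [DecidableEq V]

/-- Asynchronous update of component `i` of the Boolean network `f`. -/
def localUpdate (f : (V → Bool) → V → Bool) (i : V) (x : V → Bool) : V → Bool :=
  Function.update x i (f x i)

/-- `f^w` : for `w = i₁,…,i_ℓ`, `wordUpdate f w = f^{i_ℓ} ∘ ⋯ ∘ f^{i₁}`. -/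
def wordUpdate (f : (V → Bool) → V → Bool) (w : List V) (x : V → Bool) : V → Bool :=
  w.foldl (fun y i => localUpdate f i y) x

/-- `w` is a synchronizing word for `f`: `f^w` is constant. -/
def SyncWord (f : (V → Bool) → V → Bool) (w : List V) : Prop :=
  ∃ c : V → Bool, ∀ x, wordUpdate f w x = c

/-- `f` is synchronizing. -/
def Synchronizing (f : (V → Bool) → V → Bool) : Prop := ∃ w, SyncWord f w

/-- Positive arc of the signed interaction digraph of `f`. -/
def posIArc (f : (V → Bool) → V → Bool) (j i : V) : Prop :=
  ∃ x : V → Bool, x j = false ∧ f x i = false ∧ f (Function.update x j true) i = true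

/-- Negative arc of the signed interaction digraph of `f`. -/
def negIArc (f : (V → Bool) → V → Bool) (j i : V) : Prop :=
  ∃ x : V → Bool, x j = false ∧ f x i = true ∧ f (Function.update x j true) i = false

/-- `f` is a Boolean network on `G`: the signed interaction digraph of `f` is `G`. -/
def IsBNOn (f : (V → Bool) → V → Bool) (G : SignedDigraph V) : Prop :=
  (∀ j i, G.pos j i ↔ posIArc f j i) ∧ (∀ j i, G.neg j i ↔ negIArc f j i)

/-- Component `i` of `f` is a conjunction with respect to `G`. -/
def IsConjunction (G : SignedDigraph V) (f : (V → Bool) → V → Bool) (i : V) : Prop :=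
  ∀ x : V → Bool, (f x i = true ↔
    (∀ j, G.pos j i → x j = true) ∧ (∀ j, G.neg j i → x j = false))

/-- Component `i` of `f` is a disjunction with respect to `G`. -/
def IsDisjunction (G : SignedDigraph V) (f : (V → Bool) → V → Bool) (i : V) : Prop :=
  ∀ x : V → Bool, (f x i = false ↔
    (∀ j, G.pos j i → x j = false) ∧ (∀ j, G.neg j i → x j = true))

/-- `f` is an and-or-net on `G`. -/
def IsAndOrNet (G : SignedDigraph V) (f : (V → Bool) → V → Bool) : Prop :=
  IsBNOn f G ∧ ∀ i, IsConjunction G f i ∨ IsDisjunction G f i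

/-- `f` is the and-net on `G`. -/
def IsAndNet (G : SignedDigraph V) (f : (V → Bool) → V → Bool) : Prop :=
  IsBNOn f G ∧ ∀ i, IsConjunction G f i

/-- `w` is a canalizing word from `(i, a)` with image `b`. -/
def Canalizing (f : (V → Bool) → V → Bool) (i : V) (a : Bool) (w : List V)
    (b : V → Bool) : Prop :=
  i ∉ w ∧ w.Nodup ∧ ∀ x : V → Bool, x i = a → ∀ j ∈ w, wordUpdate f w x j = b j

end BooleanNetwork

/-!
Every vertex `i` of an initial cycle `S` has exactly one in-neighbour `p i`, and it lies in `S`;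
hence `f_i` is either `x ↦ x_{p i}` or `x ↦ ¬ x_{p i}`. So complementing a configuration on `S`
complements its image under every `f^i`, on `S`, and by induction under every `f^w`. Were `f^w`
constant, the images of `0` and of the indicator of `S` would coincide, yet differ on `S ≠ ∅`.
-/

open Function

namespace SignedDigraph

variable {V : Type*} {G : SignedDigraph V}

theorem exists_arc_iff_of_inDegree_eq_one [Finite V] {i : V} (h : G.inDegree i = 1) :
    ∃ j₀, ∀ j, G.Arc j i ↔ j = j₀ := by
  have hne : {j | G.Arc j i}.Nonempty := by
    by_contra hempty
    have hpos : {j | G.pos j i} = ∅ :=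
      Set.eq_empty_of_forall_notMem fun j hj => hempty ⟨j, Or.inl hj⟩
    have hneg : {j | G.neg j i} = ∅ :=
      Set.eq_empty_of_forall_notMem fun j hj => hempty ⟨j, Or.inr hj⟩
    simp [inDegree, hpos, hneg] at h
  have hle : {j | G.Arc j i}.ncard ≤ 1 := h ▸ Set.ncard_union_le _ _
  obtain ⟨j₀, hj₀⟩ := Set.ncard_eq_one.mp (le_antisymm hle ((Set.ncard_pos).mpr hne))
  exact ⟨j₀, fun j => Set.ext_iff.mp hj₀ j⟩

theorem IsInitialComponent.induce_arc_iff {S : Set V} (hS : G.IsInitialComponent S) {j i : V}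
    (hi : i ∈ S) : (G.induce S).Arc j i ↔ G.Arc j i := by
  constructor
  · rintro (⟨-, -, h⟩ | ⟨-, -, h⟩)
    exacts [Or.inl h, Or.inr h]
  · intro h
    have hj : j ∈ S := hS.2 j i hi h
    rcases h with h | h
    exacts [Or.inl ⟨hj, hi, h⟩, Or.inr ⟨hj, hi, h⟩]

theorem HasInitialCycle.exists_unique_inNeighbor [Finite V] (h : G.HasInitialCycle) :
    ∃ S : Set V, S.Nonempty ∧ ∀ i ∈ S, ∃ j₀ ∈ S, ∀ j, G.Arc j i ↔ j = j₀ := by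
  obtain ⟨S, hinit, hne, hdeg, -⟩ := h
  refine ⟨S, hne, fun i hi => ?_⟩
  obtain ⟨j₀, hj₀⟩ := exists_arc_iff_of_inDegree_eq_one (hdeg i hi)
  have harc : ∀ j, G.Arc j i ↔ j = j₀ := fun j =>
    (hinit.induce_arc_iff hi).symm.trans (hj₀ j)
  exact ⟨j₀, hinit.2 j₀ i hi ((harc j₀).mpr rfl), harc⟩

end SignedDigraph

namespace IsBNOn

variable {V : Type*} [DecidableEq V] {f : (V → Bool) → V → Bool} {G : SignedDigraph V}

theorem exists_update_eq_not_of_arc (hf : IsBNOn f G) {j i : V} (h : G.Arc j i) :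
    ∃ x : V → Bool, f (update x j true) i = !f (update x j false) i := by
  rcases h with hpos | hneg
  · obtain ⟨x, hx, h0, h1⟩ := (hf.1 j i).mp hpos
    exact ⟨x, by rw [h1, update_eq_self_iff.mpr hx.symm, h0]; rfl⟩
  · obtain ⟨x, hx, h0, h1⟩ := (hf.2 j i).mp hneg
    exact ⟨x, by rw [h1, update_eq_self_iff.mpr hx.symm, h0]; rfl⟩

theorem apply_update_true_of_not_arc (hf : IsBNOn f G) {j i : V} (h : ¬ G.Arc j i)
    (x : V → Bool) : f (update x j true) i = f (update x j false) i := by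
  have hx : update x j false j = false := update_self j false x
  have hidem : update (update x j false) j true = update x j true := update_idem _ _ _
  by_contra hne
  apply h
  cases h0 : f (update x j false) i <;> cases h1 : f (update x j true) i
  · exact absurd (h1.trans h0.symm) hne
  · exact Or.inl ((hf.1 j i).mpr ⟨_, hx, h0, hidem ▸ h1⟩)
  · exact Or.inr ((hf.2 j i).mpr ⟨_, hx, h0, hidem ▸ h1⟩)
  · exact absurd (h1.trans h0.symm) hne

theorem apply_update_of_not_arc (hf : IsBNOn f G) {j i : V} (h : ¬ G.Arc j i)
    (x : V → Bool) (b : Bool) : f (update x j b) i = f x i := by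
  have key : ∀ b, f (update x j b) i = f (update x j false) i := by
    rintro (_ | _)
    · rfl
    · exact hf.apply_update_true_of_not_arc h x
  rw [key b, ← key (x j), update_eq_self]

theorem apply_eq_of_forall_arc [Finite V] (hf : IsBNOn f G) {i : V} {x y : V → Bool}
    (h : ∀ j, G.Arc j i → x j = y j) : f x i = f y i := by
  have := Fintype.ofFinite V
  suffices H : ∀ s : Finset V, ∀ x : V → Bool, (∀ j ∉ s, x j = y j) →
      (∀ j, G.Arc j i → x j = y j) → f x i = f y i from
    H Finset.univ x (fun j hj => absurd (Finset.mem_univ j) hj) h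
  intro s
  induction s using Finset.induction_on with
  | empty => exact fun x hx _ => by rw [funext fun j => hx j (Finset.notMem_empty j)]
  | insert a s _ ih =>
    intro x hx hxy
    have hupd : f (update x a (y a)) i = f x i := by
      by_cases harc : G.Arc a i
      · rw [← hxy a harc, update_eq_self]
      · exact hf.apply_update_of_not_arc harc x _
    have hagree : ∀ j, j = a ∨ x j = y j → update x a (y a) j = y j := by
      intro j hj
      rcases eq_or_ne j a with rfl | hja
      · exact update_self _ _ _
      · rw [update_of_ne hja]; exact hj.resolve_left hja
    rw [← hupd]
    refine ih _ (fun j hj => hagree j ?_) (fun j hj => hagree j (Or.inr (hxy j hj)))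
    by_cases hja : j = a
    · exact Or.inl hja
    · exact Or.inr (hx j (by simp [hja, hj]))

theorem apply_eq_not_of_arc_iff [Finite V] (hf : IsBNOn f G) {i j₀ : V}
    (h : ∀ j, G.Arc j i ↔ j = j₀) {x y : V → Bool} (hxy : y j₀ = !x j₀) :
    f y i = !f x i := by
  obtain ⟨z, hz⟩ := hf.exists_update_eq_not_of_arc ((h j₀).mpr rfl)
  have hread : ∀ x : V → Bool, f x i = f (update z j₀ (x j₀)) i := fun x =>
    hf.apply_eq_of_forall_arc fun j hj => by rw [(h j).mp hj, update_self]
  have hneg : ∀ b, f (update z j₀ (!b)) i = !f (update z j₀ b) i := by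
    rintro (_ | _)
    · exact hz
    · rw [Bool.not_true, hz, Bool.not_not]
  rw [hread y, hread x, hxy, hneg]

end IsBNOn

section Complement

variable {V : Type*} [DecidableEq V] {f : (V → Bool) → V → Bool} {S : Set V}

def ComplOn (S : Set V) (x y : V → Bool) : Prop := ∀ j ∈ S, y j = !x j

theorem ComplOn.localUpdate (hf : ∀ i ∈ S, ∀ x y, ComplOn S x y → f y i = !f x i) (i : V)
    {x y : V → Bool} (hxy : ComplOn S x y) :
    ComplOn S (localUpdate f i x) (localUpdate f i y) := by
  intro j hj
  rcases eq_or_ne j i with rfl | hji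
  · simp only [_root_.localUpdate, update_self]
    exact hf j hj x y hxy
  · simp only [_root_.localUpdate, update_of_ne hji]
    exact hxy j hj

theorem ComplOn.wordUpdate (hf : ∀ i ∈ S, ∀ x y, ComplOn S x y → f y i = !f x i)
    (w : List V) {x y : V → Bool} (hxy : ComplOn S x y) :
    ComplOn S (wordUpdate f w x) (wordUpdate f w y) := by
  induction w generalizing x y with
  | nil => exact hxy
  | cons i w ih => exact ih (hxy.localUpdate hf i)

theorem not_synchronizing_of_complOn (hS : S.Nonempty)
    (hf : ∀ i ∈ S, ∀ x y, ComplOn S x y → f y i = !f x i) : ¬ Synchronizing f := by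
  classical
  rintro ⟨w, c, hc⟩
  obtain ⟨u, hu⟩ := hS
  have hcompl : ComplOn S (wordUpdate f w fun _ => false)
      (wordUpdate f w fun j => decide (j ∈ S)) :=
    ComplOn.wordUpdate hf w fun j hj => by simp [hj]
  have hu' := hcompl u hu
  rw [hc, hc] at hu'
  exact (Bool.eq_not_self _).mp hu'

end Complement

/-- Lemma 3 of the paper. If a signed digraph `G` has an initial
cycle, then no Boolean network on `G` is synchronizing. -/
theorem statement4 {V : Type} [Fintype V] [DecidableEq V]
    (G : SignedDigraph V) (h : G.HasInitialCycle) :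
    ∀ f : (V → Bool) → V → Bool, IsBNOn f G → ¬ Synchronizing f := by
  intro f hf
  obtain ⟨S, hne, hunique⟩ := h.exists_unique_inNeighbor
  refine not_synchronizing_of_complOn hne fun i hi x y hxy => ?_
  obtain ⟨j₀, hj₀S, hj₀⟩ := hunique i hi
  exact hf.apply_eq_not_of_arc_iff hj₀ (hxy j₀ hj₀S)
end

section
/- Let f be a Boolean network on a signed digraph G, let i be a vertex and a ∈ {0,1}. Let w be a canalizing word from (i,a) with image b, and suppose that no source of G belongs to {w}. Then for every j ∈ {w}, G has a path from i to j whose internal vertices all lie in {w}, and this path is positive if a = b_j and negative otherwise. -/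
section Walk

variable {V : Type*}

theorem walkEnd_concat (u : V) (p : List (V × Bool)) (q : V × Bool) :
    walkEnd u (p ++ [q]) = q.1 := by
  simp [walkEnd]

theorem walkEnd_cons (u : V) (s : V × Bool) (p : List (V × Bool)) :
    walkEnd u (s :: p) = walkEnd s.1 p := by
  simp only [walkEnd, List.map_cons, List.getLastD_cons]

theorem walkSign_concat (p : List (V × Bool)) (q : V × Bool) :
    walkSign (p ++ [q]) = (walkSign p == q.2) := by
  simp [walkSign, List.foldl_append]

end Walk

namespace SignedDigraph

variable {V : Type*} (G : SignedDigraph V)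

def SignedArc (j i : V) (s : Bool) : Prop := if s then G.pos j i else G.neg j i

def HasPathIn (u v : V) (S : List V) (σ : Bool) : Prop :=
  ∃ steps, G.IsPathFrom u steps v ∧ (∀ t ∈ steps.map Prod.fst, t ∈ S) ∧ walkSign steps = σ

variable {G}

theorem IsWalk.concat {u : V} {p : List (V × Bool)} {q : V × Bool} (hp : G.IsWalk u p)
    (hq : G.SignedArc (walkEnd u p) q.1 q.2) : G.IsWalk u (p ++ [q]) := by
  induction p generalizing u with
  | nil => exact ⟨hq, trivial⟩
  | cons s p ih => exact ⟨hp.1, ih hp.2 (by rwa [walkEnd_cons] at hq)⟩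

theorem IsPathFrom.concat {u v x : V} {p : List (V × Bool)} {s : Bool}
    (hp : G.IsPathFrom u p v) (harc : G.SignedArc v x s) (hx : x ∉ u :: p.map Prod.fst) :
    G.IsPathFrom u (p ++ [(x, s)]) x := by
  obtain ⟨⟨hwalk, hnodup⟩, rfl⟩ := hp
  refine ⟨⟨hwalk.concat harc, ?_⟩, walkEnd_concat u p _⟩
  rw [List.map_append, List.map_singleton, ← List.cons_append, ← List.concat_eq_append]
  exact hnodup.concat hx

theorem hasPathIn_self (u : V) : G.HasPathIn u u [] true :=
  ⟨[], ⟨⟨trivial, List.nodup_singleton u⟩, rfl⟩, by simp, rfl⟩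

theorem HasPathIn.mono {u v : V} {S T : List V} {σ : Bool} (h : G.HasPathIn u v S σ)
    (hST : S ⊆ T) : G.HasPathIn u v T σ :=
  let ⟨steps, hpath, hmem, hsign⟩ := h
  ⟨steps, hpath, fun t ht => hST (hmem t ht), hsign⟩

theorem HasPathIn.concat {u v x : V} {S : List V} {σ τ : Bool} (h : G.HasPathIn u v S σ)
    (harc : G.SignedArc v x τ) (hxu : x ≠ u) (hxS : x ∉ S) :
    G.HasPathIn u x (S ++ [x]) (σ == τ) := by
  obtain ⟨steps, hpath, hmem, rfl⟩ := h
  refine ⟨steps ++ [(x, τ)], hpath.concat harc ?_, ?_, walkSign_concat steps _⟩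
  · rintro (_ | ⟨_, hx⟩)
    · exact hxu rfl
    · exact hxS (hmem x hx)
  · simp only [List.map_append, List.mem_append, List.map_cons, List.map_nil]
    rintro t (ht | ht)
    · exact .inl (hmem t ht)
    · exact .inr ht

end SignedDigraph

open Function SignedDigraph

theorem Finset.exists_update_of_piecewise {ι α β : Type*} [DecidableEq ι]
    (h : (ι → α) → β) (b y : ι → α) (c : β) (s : Finset ι) (hs : h (s.piecewise b y) = c)
    (hy : h y ≠ c) : ∃ k ∈ s, ∃ z : ι → α, h z ≠ c ∧ h (update z k (b k)) = c := by
  induction s using Finset.induction_on with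
  | empty => exact absurd (by simpa using hs) hy
  | insert k s _ ih =>
    rw [Finset.piecewise_insert] at hs
    by_cases hk : h (s.piecewise b y) = c
    · obtain ⟨k', hk', z, hz⟩ := ih hk
      exact ⟨k', Finset.mem_insert_of_mem hk', z, hz⟩
    · exact ⟨k, Finset.mem_insert_self k s, _, hk, hs⟩

section BooleanNetwork

variable {V : Type*} [DecidableEq V]

theorem wordUpdate_append (f : (V → Bool) → V → Bool) (u v : List V) (x : V → Bool) :
    wordUpdate f (u ++ v) x = wordUpdate f v (wordUpdate f u x) :=
  List.foldl_append ..

theorem wordUpdate_apply_of_notMem (f : (V → Bool) → V → Bool) {w : List V} {j : V}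
    (hj : j ∉ w) (x : V → Bool) : wordUpdate f w x j = x j := by
  induction w generalizing x with
  | nil => rfl
  | cons k w ih =>
    rw [List.mem_cons, not_or] at hj
    exact (ih hj.2 _).trans (update_of_ne hj.1 _ _)

theorem wordUpdate_cons_apply_self (f : (V → Bool) → V → Bool) {j : V} {w : List V}
    (hj : j ∉ w) (x : V → Bool) : wordUpdate f (j :: w) x j = f x j :=
  (wordUpdate_apply_of_notMem f hj _).trans (update_self j _ x)

variable {f : (V → Bool) → V → Bool}

theorem Canalizing.wordUpdate_prefix {i : V} {a : Bool} {u v : List V} {b : V → Bool}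
    (hw : Canalizing f i a (u ++ v) b) {x : V → Bool} (hx : x i = a) :
    wordUpdate f u x = u.toFinset.piecewise b x := by
  funext t
  by_cases ht : t ∈ u
  · have htv : t ∉ v := List.disjoint_of_nodup_append hw.2.1 ht
    rw [Finset.piecewise_eq_of_mem _ _ _ (List.mem_toFinset.2 ht),
      ← wordUpdate_apply_of_notMem f htv (wordUpdate f u x), ← wordUpdate_append]
    exact hw.2.2 x hx t (List.mem_append_left v ht)
  · rw [Finset.piecewise_eq_of_notMem _ _ _ (mt List.mem_toFinset.1 ht),
      wordUpdate_apply_of_notMem f ht]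

theorem Canalizing.apply_piecewise {i j : V} {a : Bool} {u v : List V} {b : V → Bool}
    (hw : Canalizing f i a (u ++ j :: v) b) {x : V → Bool} (hx : x i = a) :
    f (u.toFinset.piecewise b x) j = b j := by
  have hjv : j ∉ v := (List.nodup_cons.1 (List.nodup_append.1 hw.2.1).2.1).1
  rw [← hw.wordUpdate_prefix hx, ← wordUpdate_cons_apply_self f hjv, ← wordUpdate_append]
  exact hw.2.2 x hx j (by simp)

variable {G : SignedDigraph V}

theorem IsBNOn.signedArc_of_update_true (hf : IsBNOn f G) {x : V → Bool} {k j : V}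
    (hx : x k = false) (h : f (update x k true) j ≠ f x j) :
    G.SignedArc k j (f (update x k true) j) := by
  cases hup : f (update x k true) j <;> rw [hup] at h
  · exact (hf.2 k j).2 ⟨x, hx, by simpa using h, hup⟩
  · exact (hf.1 k j).2 ⟨x, hx, by simpa using h, hup⟩

theorem IsBNOn.signedArc_of_update_ne (hf : IsBNOn f G) {z : V → Bool} {k j : V} {d : Bool}
    (h : f (update z k d) j ≠ f z j) : G.SignedArc k j (d == f (update z k d) j) := by
  have hzk : z k ≠ d := fun hd => h (by rw [← hd, update_eq_self])
  cases d
  · have hz : update (update z k false) k true = z := by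
      rw [update_idem, ← eq_true_of_ne_false hzk, update_eq_self]
    have := hf.signedArc_of_update_true (update_self k false z) (by rwa [hz, ne_comm])
    rw [hz] at this
    simpa [Bool.eq_not_of_ne h.symm] using this
  · simpa using hf.signedArc_of_update_true (Bool.eq_false_iff.2 hzk) h

theorem IsBNOn.exists_apply_ne_of_not_isSource (hf : IsBNOn f G) {j : V}
    (hj : ¬ G.IsSource j) (c : Bool) : ∃ y : V → Bool, f y j ≠ c := by
  have hvar : ∃ x x' : V → Bool, f x j ≠ f x' j := by
    obtain ⟨k, hk | hk⟩ := not_forall_not.1 hj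
    · obtain ⟨x, -, h0, h1⟩ := (hf.1 k j).1 hk
      exact ⟨x, update x k true, by rw [h0, h1]; decide⟩
    · obtain ⟨x, -, h0, h1⟩ := (hf.2 k j).1 hk
      exact ⟨x, update x k true, by rw [h0, h1]; decide⟩
  obtain ⟨x, x', hne⟩ := hvar
  by_cases hx : f x j = c
  · exact ⟨x', fun hx' => hne (hx.trans hx'.symm)⟩
  · exact ⟨x, hx⟩

theorem Canalizing.hasPathIn_append_singleton (hf : IsBNOn f G) {i j : V} {a : Bool}
    {u v : List V} {b : V → Bool} (hw : Canalizing f i a (u ++ j :: v) b)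
    (hj : ¬ G.IsSource j) (ih : ∀ k ∈ u, G.HasPathIn i k u (a == b k)) :
    G.HasPathIn i j (u ++ [j]) (a == b j) := by
  have hji : j ≠ i := by rintro rfl; exact hw.1 (by simp)
  by_cases hconst : ∀ y, f (u.toFinset.piecewise b y) j = b j
  · obtain ⟨y, hy⟩ := hf.exists_apply_ne_of_not_isSource hj (b j)
    obtain ⟨k, hk, z, hz, hzk⟩ :=
      Finset.exists_update_of_piecewise (f · j) b y (b j) u.toFinset (hconst y) hy
    have harc : G.SignedArc k j (b k == b j) := by
      have := hf.signedArc_of_update_ne (z := z) (d := b k) (by rw [hzk]; exact Ne.symm hz)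
      rwa [hzk] at this
    have hju : j ∉ u := fun h => (List.nodup_append.1 hw.2.1).2.2 j h j (by simp) rfl
    have hsign : ((a == b k) == (b k == b j)) = (a == b j) := by
      cases a <;> cases b k <;> cases b j <;> rfl
    simpa only [hsign] using (ih k (List.mem_toFinset.1 hk)).concat harc hji hju
  · push Not at hconst
    obtain ⟨y, hy⟩ := hconst
    have hiu : i ∉ u.toFinset := fun h => hw.1 (by simp [List.mem_toFinset.1 h])
    have hupd : f (update (u.toFinset.piecewise b y) i a) j = b j := by
      rw [Finset.update_piecewise_of_notMem _ _ _ hiu]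
      exact hw.apply_piecewise (update_self i a y)
    have harc : G.SignedArc i j (a == b j) := by
      have := hf.signedArc_of_update_ne (d := a) (by rw [hupd]; exact Ne.symm hy)
      rwa [hupd] at this
    simpa using ((hasPathIn_self i).concat harc hji List.not_mem_nil).mono (by simp)

theorem Canalizing.hasPathIn (hf : IsBNOn f G) {i : V} {a : Bool} {w : List V}
    {b : V → Bool} (hw : Canalizing f i a w b) (hsrc : ∀ j ∈ w, ¬ G.IsSource j)
    {u : List V} (hu : u <+: w) : ∀ k ∈ u, G.HasPathIn i k u (a == b k) := by
  induction u using List.reverseRecOn with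
  | nil => simp
  | append_singleton u j ih =>
    obtain ⟨v, rfl⟩ := hu
    have ih' := ih (List.prefix_append_of_prefix (List.prefix_append u [j]))
    intro k hk
    rcases List.mem_append.1 hk with hk | hk
    · exact (ih' k hk).mono (List.subset_append_left u [j])
    · rw [List.mem_singleton.1 hk]
      rw [List.append_assoc, List.singleton_append] at hw
      exact hw.hasPathIn_append_singleton hf (hsrc j (by simp)) ih'

end BooleanNetwork

theorem statement8_general {V : Type} [DecidableEq V]
    (G : SignedDigraph V)
    (f : (V → Bool) → V → Bool) (hf : IsBNOn f G)
    (i : V) (a : Bool) (w : List V) (b : V → Bool)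
    (hw : Canalizing f i a w b)
    (hsrc : ∀ j ∈ w, ¬ G.IsSource j) :
    ∀ j ∈ w, ∃ steps : List (V × Bool),
      G.IsPathFrom i steps j ∧
      (∀ v ∈ (steps.map Prod.fst).dropLast, v ∈ w) ∧
      walkSign steps = (a == b j) := by
  intro j hj
  obtain ⟨steps, hpath, hmem, hsign⟩ := hw.hasPathIn hf hsrc (List.prefix_refl w) j hj
  exact ⟨steps, hpath, fun v hv => hmem v (List.dropLast_subset _ hv), hsign⟩

/-- Lemma 7 of the paper. Let `f` be a Boolean network on a signed
digraph `G`, `i` a vertex and `a ∈ {0,1}`. Let `w` be a canalizing word from `(i,a)`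
with image `b`, with no source of `G` in `{w}`. Then for every `j ∈ {w}`, `G` has a
path from `i` to `j` whose internal vertices all lie in `{w}`, positive if `a = b_j`
and negative otherwise. -/
theorem statement8 {V : Type} [Fintype V] [DecidableEq V]
    (G : SignedDigraph V)
    (f : (V → Bool) → V → Bool) (hf : IsBNOn f G)
    (i : V) (a : Bool) (w : List V) (b : V → Bool)
    (hw : Canalizing f i a w b)
    (hsrc : ∀ j ∈ w, ¬ G.IsSource j) :
    ∀ j ∈ w, ∃ steps : List (V × Bool),
      G.IsPathFrom i steps j ∧
      (∀ v ∈ (steps.map Prod.fst).dropLast, v ∈ w) ∧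
      walkSign steps = (a == b j) :=
  statement8_general G f hf i a w b hw hsrc
end
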